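/- arXiv:1805.07803 — 6 statements merged into one kernel-verified Lean document; each statement's English description precedes it below -/
import Mathlib

section
/- For the Bernoulli–Laplace chain (X_t), with f_2(x) = 1 - 2(2n-1)x/n² + 2(2n-1)x(x-1)/(n²(n-1)) an eigenfunction with eigenvalue f_2(k), the conditional variance satisfies Var(X_t | X_0) = n²/(4(2n-1)) + n²(n-1)/(2(2n-1)) · f_2(k)^t f_2(X_0) - (n²/4)(1 - 2k/n)^{2t}(1 - 2X_0/n)². -/
/-!
Write `f₁ x = 1 - 2x/n`. Then `x = n/2 (1 - f₁ x)` and, by the identity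
`f₁² = 1/(2n-1) + (2n-2)/(2n-1) f₂`, also `x²` is a linear combination of `1`, `f₁`
and `f₂`. All three are eigenvectors of `P` (the constant one with eigenvalue `1`, as the
rows of `P` sum to `1`), so the first two moments of `X_t` given `X_0` are explicit in
`f₁(X_0)` and `f₂(X_0)`, and subtracting the squared mean leaves the stated formula.
-/

open Matrix

theorem Matrix.pow_mulVec_of_mulVec_eq_smul {ι R : Type*} [Fintype ι] [DecidableEq ι]
    [CommSemiring R] {P : Matrix ι ι R} {v : ι → R} {c : R} (h : P *ᵥ v = c • v) (t : ℕ) :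
    (P ^ t) *ᵥ v = c ^ t • v := by
  induction t with
  | zero => simp
  | succ t ih => rw [pow_succ', ← mulVec_mulVec, ih, mulVec_smul, h, smul_smul, pow_succ]

theorem Matrix.pow_mulVec_one_of_sum_row_eq_one {ι R : Type*} [Fintype ι] [DecidableEq ι]
    [CommSemiring R] {P : Matrix ι ι R} (h : ∀ x, ∑ y, P x y = 1) (t : ℕ) :
    (P ^ t) *ᵥ 1 = 1 := by
  have hP : P *ᵥ 1 = (1 : R) • 1 := by
    ext x
    simpa [mulVec, dotProduct] using h x
  simpa using pow_mulVec_of_mulVec_eq_smul hP t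

theorem one_sub_two_mul_div_sq {n : ℝ} (hn : n ≠ 0) (hn₁ : n - 1 ≠ 0) (h2n₁ : 2 * n - 1 ≠ 0)
    (x : ℝ) :
    (1 - 2 * x / n) ^ 2 = 1 / (2 * n - 1) + (2 * n - 2) / (2 * n - 1) *
      (1 - 2 * (2 * n - 1) * x / n ^ 2
        + 2 * (2 * n - 1) * x * (x - 1) / (n ^ 2 * (n - 1))) := by
  field_simp
  ring

theorem bernoulliLaplace_conditional_variance_general (n k : ℕ) (hn : 2 ≤ n)
    (f₂ : ℝ → ℝ)
    (hf₂def : ∀ x : ℝ, f₂ x = 1 - 2 * (2 * (n : ℝ) - 1) * x / n ^ 2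
      + 2 * (2 * (n : ℝ) - 1) * x * (x - 1) / ((n : ℝ) ^ 2 * ((n : ℝ) - 1)))
    (P : Matrix (Fin (n + 1)) (Fin (n + 1)) ℝ)
    (hP1 : ∀ x, ∑ y, P x y = 1)
    (heig₁ : P.mulVec (fun i : Fin (n + 1) => 1 - 2 * (i : ℝ) / n)
      = (1 - 2 * (k : ℝ) / n) • (fun i : Fin (n + 1) => 1 - 2 * (i : ℝ) / n))
    (heig₂ : P.mulVec (fun i : Fin (n + 1) => f₂ (i : ℝ)) = f₂ (k : ℝ) • (fun i : Fin (n + 1) => f₂ (i : ℝ))) :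
    ∀ (t : ℕ) (x₀ : Fin (n + 1)),
      (P ^ t).mulVec (fun i : Fin (n + 1) => (i : ℝ) ^ 2) x₀ - ((P ^ t).mulVec (fun i : Fin (n + 1) => (i : ℝ)) x₀) ^ 2
        = (n : ℝ) ^ 2 / (4 * (2 * (n : ℝ) - 1))
          + (n : ℝ) ^ 2 * ((n : ℝ) - 1) / (2 * (2 * (n : ℝ) - 1))
            * f₂ (k : ℝ) ^ t * f₂ (x₀ : ℝ)
          - (n : ℝ) ^ 2 / 4 * (1 - 2 * (k : ℝ) / n) ^ (2 * t)
            * (1 - 2 * (x₀ : ℝ) / n) ^ 2 := by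
  intro t x₀
  have hn₂ : (2 : ℝ) ≤ n := by exact_mod_cast hn
  have hn₀ : (n : ℝ) ≠ 0 := by positivity
  have hn₁ : (n : ℝ) - 1 ≠ 0 := by linarith
  have h2n₁ : 2 * (n : ℝ) - 1 ≠ 0 := by linarith
  set f₁ : Fin (n + 1) → ℝ := fun i => 1 - 2 * (i : ℝ) / n
  have hid : (fun i : Fin (n + 1) => (i : ℝ)) = ((n : ℝ) / 2) • (1 - f₁) := by
    ext i
    simp only [f₁, Pi.smul_apply, Pi.sub_apply, Pi.one_apply, smul_eq_mul]
    field_simp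
    ring
  have hsq : (fun i : Fin (n + 1) => (i : ℝ) ^ 2) = ((n : ℝ) ^ 2 / 4) •
      ((1 + 1 / (2 * n - 1) : ℝ) • 1 - (2 : ℝ) • f₁
        + ((2 * n - 2) / (2 * n - 1) : ℝ) • fun i : Fin (n + 1) => f₂ i) := by
    ext i
    calc (i : ℝ) ^ 2 = (n : ℝ) ^ 2 / 4 * (1 - 2 * f₁ i + f₁ i ^ 2) := by
          simp only [f₁]
          field_simp
          ring
      _ = _ := by
          simp only [f₁, one_sub_two_mul_div_sq hn₀ hn₁ h2n₁, ← hf₂def, Pi.smul_apply,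
            Pi.sub_apply, Pi.add_apply, Pi.one_apply, smul_eq_mul]
          ring
  rw [hsq, hid]
  simp only [mulVec_smul, mulVec_sub, mulVec_add, pow_mulVec_one_of_sum_row_eq_one hP1,
    pow_mulVec_of_mulVec_eq_smul heig₁, pow_mulVec_of_mulVec_eq_smul heig₂, Pi.smul_apply,
    Pi.sub_apply, Pi.add_apply, Pi.one_apply, smul_eq_mul, pow_mul', f₁]
  generalize (1 - 2 * (k : ℝ) / n) ^ t = a
  generalize f₂ k ^ t = b
  field_simp
  ring

/-- For the Bernoulli–Laplace chain with eigenfunctions `f₁(x) = 1 - 2x/n` (eigenvalue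
`1 - 2k/n`) and `f₂(x) = 1 - 2(2n-1)x/n² + 2(2n-1)x(x-1)/(n²(n-1))` (eigenvalue `f₂(k)`), the
conditional variance satisfies
`Var(X_t|X_0) = n²/(4(2n-1)) + n²(n-1)/(2(2n-1)) f₂(k)^t f₂(X_0)
  - (n²/4)(1-2k/n)^{2t}(1-2X_0/n)²`. -/
theorem bernoulliLaplace_conditional_variance (n k : ℕ) (hn : 2 ≤ n)
    (f₂ : ℝ → ℝ)
    (hf₂def : ∀ x : ℝ, f₂ x = 1 - 2 * (2 * (n : ℝ) - 1) * x / n ^ 2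
      + 2 * (2 * (n : ℝ) - 1) * x * (x - 1) / ((n : ℝ) ^ 2 * ((n : ℝ) - 1)))
    (P : Matrix (Fin (n + 1)) (Fin (n + 1)) ℝ)
    (hP0 : ∀ x y, 0 ≤ P x y) (hP1 : ∀ x, ∑ y, P x y = 1)
    (heig₁ : P.mulVec (fun i : Fin (n + 1) => 1 - 2 * (i : ℝ) / n)
      = (1 - 2 * (k : ℝ) / n) • (fun i : Fin (n + 1) => 1 - 2 * (i : ℝ) / n))
    (heig₂ : P.mulVec (fun i : Fin (n + 1) => f₂ (i : ℝ)) = f₂ (k : ℝ) • (fun i : Fin (n + 1) => f₂ (i : ℝ))) :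
    ∀ (t : ℕ) (x₀ : Fin (n + 1)),
      (P ^ t).mulVec (fun i : Fin (n + 1) => (i : ℝ) ^ 2) x₀ - ((P ^ t).mulVec (fun i : Fin (n + 1) => (i : ℝ)) x₀) ^ 2
        = (n : ℝ) ^ 2 / (4 * (2 * (n : ℝ) - 1))
          + (n : ℝ) ^ 2 * ((n : ℝ) - 1) / (2 * (2 * (n : ℝ) - 1))
            * f₂ (k : ℝ) ^ t * f₂ (x₀ : ℝ)
          - (n : ℝ) ^ 2 / 4 * (1 - 2 * (k : ℝ) / n) ^ (2 * t)
            * (1 - 2 * (x₀ : ℝ) / n) ^ 2 :=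
  bernoulliLaplace_conditional_variance_general n k hn f₂ hf₂def P hP1 heig₁ heig₂
end

section
/- For the Bernoulli–Laplace chain with 1 ≤ k ≤ n/2 and any t ≥ (n/(4k)) log n, the conditional mean and variance satisfy |E(X_t | X_0) - n/2| ≤ √n and Var(X_t | X_0) ≤ n. -/
/-!
The mean is governed by the eigenvalue `r = 1 - 2k/n` of the linear eigenfunction and the
variance by `a = f₂(k)` and `r ^ 2`. Since `r ≤ exp (-2k/n)`, the assumption on `t` gives
`r ^ t ≤ 1/√n`, which settles the mean. For the variance, the constant term and the coefficient
of `r ^ (2t)` cancel exactly against `f₂(X₀)`, which rewrites the variance as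
`A (1 - a ^ t) + (n/2 - X₀)² (a ^ t - r ^ (2t))` with `A = n²/(4(2n-1))`. Now `a ≤ r ^ 2`, and
when `a < 0` it is at most `1/(2(n-1))` in absolute value, so both terms are small.
-/

open Real

theorem pow_le_inv_sqrt_of_log_le_mul {r c N : ℝ} {t : ℕ} (hr : 0 ≤ r) (hrc : r ≤ 1 - c)
    (hN : 0 < N) (ht : log N ≤ 2 * c * t) : r ^ t ≤ (√N)⁻¹ := by
  have hexp : r ^ t ≤ exp (-(c * t)) := by
    calc r ^ t ≤ exp (-c) ^ t := pow_le_pow_left₀ hr (by linarith [add_one_le_exp (-c)]) t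
      _ = exp (-(c * t)) := by rw [← exp_nat_mul]; ring_nf
  rw [← sqrt_inv, le_sqrt (by positivity) (by positivity), ← exp_log (inv_pos.2 hN), log_inv]
  calc (r ^ t) ^ 2 ≤ exp (-(c * t)) ^ 2 := pow_le_pow_left₀ (by positivity) hexp 2
    _ = exp (-(2 * c * t)) := by rw [← exp_nat_mul]; ring_nf
    _ ≤ exp (-log N) := exp_le_exp.2 (by linarith)

theorem abs_pow_mul_sub_le_sqrt {r N X : ℝ} {t : ℕ} (hr : 0 ≤ r) (hrt : r ^ t ≤ (√N)⁻¹)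
    (hX₀ : 0 ≤ X) (hXN : X ≤ N) : |r ^ t * (N / 2 - X)| ≤ √N := by
  calc |r ^ t * (N / 2 - X)| = r ^ t * |N / 2 - X| := by rw [abs_mul, abs_of_nonneg (by positivity)]
    _ ≤ (√N)⁻¹ * (N / 2) := by gcongr; exact abs_le.2 ⟨by linarith, by linarith⟩
    _ = N / √N / 2 := by ring
    _ ≤ √N := by rw [div_sqrt]; linarith [sqrt_nonneg N]

theorem mul_sub_pow_add_mul_pow_sub_le {A w a r δ : ℝ} (hA : 0 ≤ A) (hw : 0 ≤ w) (hδ₀ : 0 ≤ δ)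
    (hδ₁ : δ ≤ 1) (hδa : -δ ≤ a) (har : a ≤ r ^ 2) (t : ℕ) :
    A * (1 - a ^ t) + w * (a ^ t - r ^ (2 * t)) ≤ A * (1 + δ) + w * δ := by
  have hr : 0 ≤ r ^ (2 * t) := by rw [pow_mul]; positivity
  rcases le_or_gt 0 a with ha | ha
  · have hat : a ^ t ≤ r ^ (2 * t) := by rw [pow_mul]; exact pow_le_pow_left₀ ha har t
    have : 0 ≤ a ^ t := by positivity
    nlinarith
  rcases t.eq_zero_or_pos with rfl | ht
  · simp only [pow_zero, mul_zero, sub_self, add_zero]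
    nlinarith [mul_nonneg hA hδ₀, mul_nonneg hw hδ₀]
  have ha' : |a| ≤ δ := by rw [abs_of_neg ha]; linarith
  have hat : |a ^ t| ≤ δ := by
    rw [abs_pow]
    calc |a| ^ t ≤ |a| ^ 1 := pow_le_pow_of_le_one (abs_nonneg a) (ha'.trans hδ₁) ht
      _ ≤ δ := by rwa [pow_one]
  obtain ⟨h₁, h₂⟩ := abs_le.1 hat
  nlinarith

namespace BernoulliLaplace

/-- The paper's eigenfunction `f₂`, with the size `n` of the chain taken real. -/
noncomputable def f₂ (n x : ℝ) : ℝ :=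
  1 - 2 * (2 * n - 1) * x / n ^ 2 + 2 * (2 * n - 1) * x * (x - 1) / (n ^ 2 * (n - 1))

variable {n : ℝ}

theorem f₂_eq (hn : 1 < n) (x : ℝ) :
    f₂ n x = 1 - 2 * (2 * n - 1) * (x * (n - x)) / (n ^ 2 * (n - 1)) := by
  have : n - 1 ≠ 0 := by linarith
  unfold f₂; field_simp; ring

theorem neg_inv_le_f₂ (hn : 1 < n) (x : ℝ) : -(1 / (2 * (n - 1))) ≤ f₂ n x := by
  have : n - 1 ≠ 0 := by linarith
  have hsq : f₂ n x + 1 / (2 * (n - 1)) =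
      (2 * n - 1) * (n - 2 * x) ^ 2 / (2 * n ^ 2 * (n - 1)) := by
    rw [f₂_eq hn]; field_simp; ring
  have : 0 ≤ (2 * n - 1) * (n - 2 * x) ^ 2 / (2 * n ^ 2 * (n - 1)) := by
    apply div_nonneg <;> nlinarith
  linarith

theorem f₂_le_sq (hn : 1 < n) {x : ℝ} (hx₀ : 0 ≤ x) (hxn : x ≤ n) :
    f₂ n x ≤ (1 - 2 * x / n) ^ 2 := by
  have : n - 1 ≠ 0 := by linarith
  have hsq : (1 - 2 * x / n) ^ 2 - f₂ n x = 2 * (x * (n - x)) / (n ^ 2 * (n - 1)) := by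
    rw [f₂_eq hn]; field_simp; ring
  have : 0 ≤ 2 * (x * (n - x)) / (n ^ 2 * (n - 1)) := by
    apply div_nonneg <;> nlinarith
  linarith

theorem mul_f₂_add_eq (hn : 1 < n) (x : ℝ) :
    n ^ 2 * (n - 1) / (2 * (2 * n - 1)) * f₂ n x + n ^ 2 / (4 * (2 * n - 1)) = (n / 2 - x) ^ 2 := by
  have : n - 1 ≠ 0 := by linarith
  rw [f₂_eq hn]
  field_simp
  rw [div_eq_iff (by linarith)]
  ring

theorem variance_eq (hn : 1 < n) (a r x : ℝ) (t : ℕ) :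
    n ^ 2 / (4 * (2 * n - 1)) + n ^ 2 * (n - 1) / (2 * (2 * n - 1)) * a ^ t * f₂ n x
      - n ^ 2 / 4 * r ^ (2 * t) * (1 - 2 * x / n) ^ 2
      = n ^ 2 / (4 * (2 * n - 1)) * (1 - a ^ t) + (n / 2 - x) ^ 2 * (a ^ t - r ^ (2 * t)) := by
  have hsq : n ^ 2 / 4 * (1 - 2 * x / n) ^ 2 = (n / 2 - x) ^ 2 := by
    field_simp; ring
  linear_combination a ^ t * mul_f₂_add_eq hn x - r ^ (2 * t) * hsq

theorem stationary_variance_mul_add_le (hn : 2 ≤ n) {w : ℝ} (hw : w ≤ n ^ 2 / 4) :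
    n ^ 2 / (4 * (2 * n - 1)) * (1 + 1 / (2 * (n - 1))) + w * (1 / (2 * (n - 1))) ≤ n := by
  have : n - 1 ≠ 0 := by linarith
  have h₁ : n ^ 2 / (4 * (2 * n - 1)) * (1 + 1 / (2 * (n - 1))) = n ^ 2 / (8 * (n - 1)) := by
    field_simp
    rw [div_eq_iff (by linarith)]
    ring
  have h₂ : w * (1 / (2 * (n - 1))) ≤ n ^ 2 / 4 * (1 / (2 * (n - 1))) :=
    mul_le_mul_of_nonneg_right hw (one_div_nonneg.2 (by linarith))
  have h₃ : n ^ 2 / (8 * (n - 1)) ≤ n / 2 := by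
    rw [div_le_div_iff₀ (by linarith) (by norm_num)]; nlinarith
  have h₄ : n ^ 2 / 4 * (1 / (2 * (n - 1))) = n ^ 2 / (8 * (n - 1)) := by
    field_simp; ring
  linarith

end BernoulliLaplace

/-- For the Bernoulli–Laplace chain with `1 ≤ k ≤ n/2`, whose conditional mean and variance are
given by the explicit eigenfunction formulas, for any `t ≥ (n/(4k)) log n` one has
`|E(X_t|X_0) - n/2| ≤ √n` and `Var(X_t|X_0) ≤ n`. -/
theorem bernoulliLaplace_mean_var_bounds (n k t : ℕ) (hn : 2 ≤ n) (hk : 1 ≤ k)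
    (hk2 : 2 * k ≤ n) (X₀ : ℝ) (hX₀ : 0 ≤ X₀ ∧ X₀ ≤ n)
    (f₂ : ℝ → ℝ)
    (hf₂def : ∀ x : ℝ, f₂ x = 1 - 2 * (2 * (n : ℝ) - 1) * x / n ^ 2
      + 2 * (2 * (n : ℝ) - 1) * x * (x - 1) / ((n : ℝ) ^ 2 * ((n : ℝ) - 1)))
    (E V : ℝ)
    (hE : E = (n : ℝ) / 2 - (1 - 2 * (k : ℝ) / n) ^ t * ((n : ℝ) / 2 - X₀))
    (hV : V = (n : ℝ) ^ 2 / (4 * (2 * (n : ℝ) - 1))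
      + (n : ℝ) ^ 2 * ((n : ℝ) - 1) / (2 * (2 * (n : ℝ) - 1)) * f₂ (k : ℝ) ^ t * f₂ X₀
      - (n : ℝ) ^ 2 / 4 * (1 - 2 * (k : ℝ) / n) ^ (2 * t) * (1 - 2 * X₀ / n) ^ 2)
    (ht : (n : ℝ) / (4 * k) * Real.log n ≤ t) :
    |E - (n : ℝ) / 2| ≤ Real.sqrt n ∧ V ≤ n := by
  obtain ⟨hX₀0, hX₀n⟩ := hX₀
  have hn' : (2 : ℝ) ≤ n := by exact_mod_cast hn
  have hk' : (1 : ℝ) ≤ k := by exact_mod_cast hk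
  have hkn : 2 * (k : ℝ) ≤ n := by exact_mod_cast hk2
  have hkn' : (k : ℝ) ≤ n := by linarith
  have hr : 0 ≤ 1 - 2 * (k : ℝ) / n := by
    rw [sub_nonneg, div_le_one (by linarith)]; exact hkn
  obtain rfl : f₂ = BernoulliLaplace.f₂ n := funext hf₂def
  constructor
  · have hlog : log n ≤ 2 * (2 * k / n) * t := by
      calc log n = 2 * (2 * k / n) * (n / (4 * k) * log n) := by field_simp; ring
        _ ≤ 2 * (2 * k / n) * t := by gcongr
    rw [hE, sub_sub_cancel_left, abs_neg]
    exact abs_pow_mul_sub_le_sqrt hr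
      (pow_le_inv_sqrt_of_log_le_mul hr le_rfl (by linarith) hlog) hX₀0 hX₀n
  · have hδ₀ : 0 ≤ 1 / (2 * ((n : ℝ) - 1)) := one_div_nonneg.2 (by linarith)
    have hδ₁ : 1 / (2 * ((n : ℝ) - 1)) ≤ 1 := by rw [div_le_one (by linarith)]; linarith
    have hA : 0 ≤ (n : ℝ) ^ 2 / (4 * (2 * n - 1)) := div_nonneg (by positivity) (by linarith)
    have hw : ((n : ℝ) / 2 - X₀) ^ 2 ≤ n ^ 2 / 4 := by nlinarith
    rw [hV, BernoulliLaplace.variance_eq (by linarith)]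
    refine (mul_sub_pow_add_mul_pow_sub_le hA (sq_nonneg _) hδ₀ hδ₁ ?_ ?_ t).trans
      (BernoulliLaplace.stationary_variance_mul_add_le hn' hw)
    · exact BernoulliLaplace.neg_inv_le_f₂ (by linarith) k
    · exact BernoulliLaplace.f₂_le_sq (by linarith) (by positivity) hkn'
end

section
/- Let (M_t) be a martingale with M_t = (1 - 2X_t/n)/(1-2k/n)^t for a process (X_t) with values in {0,...,n}. Then for 0 ≤ t_1 ≤ t_2 and r > 0, P(max_{t₁ ≤ t ≤ t₂} |X_t - n/2| > r | X_0) ≤ (n²/(4r²)) (1-2k/n)^{-2(t_2 - t_1)} E((1 - 2X_{t_2}/n)² | X_0). -/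
/-!
Since `1 - 2X_t/n = -(2/n) (X_t - n/2)` and `(1 - 2k/n)^t ≤ (1 - 2k/n)^{t₁}` for `t ≥ t₁`, the event
forces `|M_t| ≥ 2r / (n (1 - 2k/n)^{t₁})` for some `t ≤ t₂`. As `X` is bounded, `M` is square
integrable, so `M²` is a nonnegative submartingale (conditional Jensen, in the form of the
nonnegativity of the conditional variance), and Doob's maximal inequality bounds the probability of
that event by `E[M_{t₂}²]` over the squared threshold.
-/

open MeasureTheory ProbabilityTheory Finset

namespace MeasureTheory

variable {Ω ι : Type*} {m0 : MeasurableSpace Ω} {μ : Measure Ω} [IsFiniteMeasure μ]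

theorem Martingale.submartingale_sq [Preorder ι] {ℱ : Filtration ι m0} {M : ι → Ω → ℝ}
    (hM : Martingale M ℱ μ) (hM2 : ∀ i, MemLp (M i) 2 μ) :
    Submartingale (fun i => M i ^ 2) ℱ μ := by
  refine ⟨fun i => (hM.stronglyAdapted i).pow 2, fun i j hij => ?_, fun i => (hM2 i).integrable_sq⟩
  have hvar : 0 ≤ᵐ[μ] Var[M j; μ | ℱ i] :=
    condExp_nonneg (ae_of_all _ fun ω => sq_nonneg _)
  filter_upwards [hvar, condVar_ae_eq_condExp_sq_sub_sq_condExp (ℱ.le i) (hM2 j),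
    hM.condExp_ae_eq hij] with ω hvar_nonneg hvar_eq hcond
  simp only [Pi.sub_apply, Pi.pow_apply, Pi.zero_apply] at hvar_nonneg hvar_eq hcond ⊢
  rw [← hcond]
  linarith

theorem Submartingale.measure_exists_le_ge_le {ℱ : Filtration ℕ m0} {f : ℕ → Ω → ℝ}
    (hf : Submartingale f ℱ μ) (hf0 : 0 ≤ f) {ε : ℝ} (hε : 0 < ε) (N : ℕ) :
    μ {ω | ∃ t ≤ N, ε ≤ f t ω} ≤ ENNReal.ofReal ((∫ ω, f N ω ∂μ) / ε) := by
  set B := {ω | (ε.toNNReal : ℝ) ≤ (range (N + 1)).sup' nonempty_range_add_one fun t => f t ω}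
  have hAB : {ω | ∃ t ≤ N, ε ≤ f t ω} ⊆ B := by
    rintro ω ⟨t, htN, ht⟩
    refine le_trans ?_ (le_sup' (fun t => f t ω) (mem_range.mpr (Nat.lt_succ_of_le htN)))
    rwa [Real.coe_toNNReal ε hε.le]
  rw [ENNReal.ofReal_div_of_pos hε, ENNReal.le_div_iff_mul_le (Or.inl (by simpa using hε))
    (Or.inl ENNReal.ofReal_ne_top), mul_comm]
  calc ENNReal.ofReal ε * μ {ω | ∃ t ≤ N, ε ≤ f t ω}
      ≤ ENNReal.ofReal ε * μ B := by gcongr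
    _ ≤ ENNReal.ofReal (∫ ω in B, f N ω ∂μ) := maximal_ineq hf hf0 N
    _ ≤ ENNReal.ofReal (∫ ω, f N ω ∂μ) :=
      ENNReal.ofReal_le_ofReal (setIntegral_le_integral (hf.integrable N) (ae_of_all _ (hf0 N)))

theorem Martingale.measure_exists_le_abs_ge_le {ℱ : Filtration ℕ m0} {M : ℕ → Ω → ℝ}
    (hM : Martingale M ℱ μ) (hM2 : ∀ t, MemLp (M t) 2 μ) {l : ℝ} (hl : 0 < l) (N : ℕ) :
    μ {ω | ∃ t ≤ N, l ≤ |M t ω|} ≤ ENNReal.ofReal ((∫ ω, M N ω ^ 2 ∂μ) / l ^ 2) := by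
  refine (measure_mono ?_).trans ((hM.submartingale_sq hM2).measure_exists_le_ge_le
    (fun t ω => sq_nonneg (M t ω)) (pow_pos hl 2) N)
  rintro ω ⟨t, htN, ht⟩
  refine ⟨t, htN, ?_⟩
  rw [Pi.pow_apply, ← sq_abs (M t ω)]
  exact pow_le_pow_left₀ hl.le ht 2

end MeasureTheory

theorem abs_one_sub_two_mul_div_le_one {x n : ℝ} (hx : x ∈ Set.Icc 0 n) :
    |1 - 2 * x / n| ≤ 1 := by
  have h0 : 0 ≤ x / n := div_nonneg hx.1 (hx.1.trans hx.2)
  have h1 : x / n ≤ 1 := div_le_one_of_le₀ hx.2 (hx.1.trans hx.2)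
  rw [abs_le, mul_div_assoc]
  constructor <;> linarith

theorem lt_abs_one_sub_two_mul_div {x n r : ℝ} (hn : 0 < n) (h : r < |x - n / 2|) :
    2 * r / n < |1 - 2 * x / n| := by
  have : 1 - 2 * x / n = -(2 / n) * (x - n / 2) := by field_simp; ring
  rw [this, abs_mul, abs_neg, abs_of_pos (by positivity : 0 < 2 / n), mul_div_right_comm]
  gcongr

theorem one_sub_two_mul_div_mem_Ioc {k n : ℕ} (hkn : 2 * k < n) :
    1 - 2 * (k : ℝ) / n ∈ Set.Ioc 0 1 := by
  have hn : (0 : ℝ) < n := by exact_mod_cast (by omega : 0 < n)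
  constructor
  · have : 2 * (k : ℝ) / n < 1 := by rw [div_lt_one hn]; exact_mod_cast hkn
    linarith
  · have : 0 ≤ 2 * (k : ℝ) / n := by positivity
    linarith

theorem doob_maximal_bound_general {Ω : Type*} [m0 : MeasurableSpace Ω]
    (μ : Measure Ω) [IsProbabilityMeasure μ] (ℱ : Filtration ℕ m0)
    (n k : ℕ) (hkn : 2 * k < n)
    (X : ℕ → Ω → ℝ) (hXval : ∀ t ω, X t ω ∈ Set.Icc (0 : ℝ) n)
    (hM : Martingale (fun t ω => (1 - 2 * X t ω / n) / (1 - 2 * (k : ℝ) / n) ^ t) ℱ μ)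
    (t₁ t₂ : ℕ) (r : ℝ) (hr : 0 < r) :
    μ {ω | ∃ t, t₁ ≤ t ∧ t ≤ t₂ ∧ r < |X t ω - (n : ℝ) / 2|}
      ≤ ENNReal.ofReal ((n : ℝ) ^ 2 / (4 * r ^ 2)
          * (1 - 2 * (k : ℝ) / n) ^ (-(2 : ℤ) * (t₂ - t₁ : ℤ))
          * ∫ ω, (1 - 2 * X t₂ ω / n) ^ 2 ∂μ) := by
  have hn : (0 : ℝ) < n := by exact_mod_cast (by omega : 0 < n)
  set c : ℝ := 1 - 2 * (k : ℝ) / n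
  obtain ⟨hc0, hc1⟩ : c ∈ Set.Ioc 0 1 := one_sub_two_mul_div_mem_Ioc hkn
  set M : ℕ → Ω → ℝ := fun t ω => (1 - 2 * X t ω / n) / c ^ t
  have hM2 : ∀ t, MemLp (M t) 2 μ := fun t =>
    MemLp.of_bound ((hM.stronglyAdapted t).mono (ℱ.le t)).aestronglyMeasurable (c ^ t)⁻¹
      (ae_of_all _ fun ω => by
        rw [Real.norm_eq_abs, abs_div, abs_of_pos (pow_pos hc0 t), div_eq_mul_inv]
        exact mul_le_of_le_one_left (by positivity) (abs_one_sub_two_mul_div_le_one (hXval t ω)))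
  have hevent : {ω | ∃ t, t₁ ≤ t ∧ t ≤ t₂ ∧ r < |X t ω - (n : ℝ) / 2|}
      ⊆ {ω | ∃ t ≤ t₂, 2 * r / n / c ^ t₁ ≤ |M t ω|} := by
    rintro ω ⟨t, ht₁, ht₂, hrt⟩
    refine ⟨t, ht₂, ?_⟩
    rw [abs_div, abs_of_pos (pow_pos hc0 t)]
    calc 2 * r / n / c ^ t₁ ≤ 2 * r / n / c ^ t :=
          div_le_div_of_nonneg_left (by positivity) (pow_pos hc0 t)
            (pow_le_pow_of_le_one hc0.le hc1 ht₁)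
      _ ≤ |1 - 2 * X t ω / n| / c ^ t := by
          gcongr; exact (lt_abs_one_sub_two_mul_div hn hrt).le
  refine (measure_mono hevent).trans ((hM.measure_exists_le_abs_ge_le hM2 (by positivity) t₂).trans
    (ENNReal.ofReal_le_ofReal (le_of_eq ?_)))
  have hzpow : c ^ (-(2 : ℤ) * (t₂ - t₁ : ℤ)) = c ^ (2 * t₁) / c ^ (2 * t₂) := by
    rw [show -(2 : ℤ) * (t₂ - t₁ : ℤ) = ((2 * t₁ : ℕ) : ℤ) - ((2 * t₂ : ℕ) : ℤ) by push_cast; ring,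
      zpow_sub₀ hc0.ne', zpow_natCast, zpow_natCast]
  simp only [M, div_pow, integral_div, hzpow, pow_mul']
  generalize ∫ ω, (1 - 2 * X t₂ ω / n) ^ 2 ∂μ = I
  field_simp
  ring

/-- If `M_t = (1 - 2X_t/n)/(1 - 2k/n)^t` is a martingale for a process `(X_t)` with values in
`{0,…,n}`, then for `0 ≤ t₁ ≤ t₂` and `r > 0`, Doob's maximal inequality yields
`P(max_{t₁ ≤ t ≤ t₂} |X_t - n/2| > r | X_0)
  ≤ (n²/(4r²)) (1 - 2k/n)^{-2(t₂-t₁)} E((1 - 2X_{t₂}/n)² | X_0)`. -/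
theorem doob_maximal_bound {Ω : Type*} [m0 : MeasurableSpace Ω]
    (μ : Measure Ω) [IsProbabilityMeasure μ] (ℱ : Filtration ℕ m0)
    (n k : ℕ) (hk : 0 < k) (hkn : 2 * k < n)
    (X : ℕ → Ω → ℝ) (hXval : ∀ t ω, X t ω ∈ Set.Icc (0 : ℝ) n)
    (hM : Martingale (fun t ω => (1 - 2 * X t ω / n) / (1 - 2 * (k : ℝ) / n) ^ t) ℱ μ)
    (t₁ t₂ : ℕ) (ht : t₁ ≤ t₂) (r : ℝ) (hr : 0 < r) :
    μ {ω | ∃ t, t₁ ≤ t ∧ t ≤ t₂ ∧ r < |X t ω - (n : ℝ) / 2|}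
      ≤ ENNReal.ofReal ((n : ℝ) ^ 2 / (4 * r ^ 2)
          * (1 - 2 * (k : ℝ) / n) ^ (-(2 : ℤ) * (t₂ - t₁ : ℤ))
          * ∫ ω, (1 - 2 * X t₂ ω / n) ^ 2 ∂μ) :=
  doob_maximal_bound_general (m0 := m0) μ ℱ n k hkn X hXval hM t₁ t₂ r hr
end

section
/- Let (Z_t) be a non-negative supermartingale adapted to a filtration (F_t), with Z_0 = z_0, |Z_{t+1} - Z_t| ≤ B for all t, and Var(Z_{t+1} | F_t) > σ² on the event {τ > t}, where τ is a stopping time. Then for every u > 12B²/σ², P(τ > u) ≤ 4z_0/(σ√u). -/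
/-! Put `h = σ√u`; if `z₀ ≥ h` the bound exceeds `1`. Otherwise stop `Z` at
`ρ = τ ∧ (first time Z ≥ h)`. The stopped process `W` stays in `[0, h + B]`, and before `ρ` it has
conditional variance at least `σ²` and drifts down, so `E (h + B - W_t)²` gains at least
`σ² P(ρ > t)` at every step. Comparing with `(h + B)²` gives `P(ρ > u) ≤ 2 z₀ (h + B) / (σ² u)`.
Being a non-negative supermartingale started at `z₀`, `W` satisfies `P(W_u ≥ h) ≤ z₀ / h` by
Markov's inequality. The event `{τ > u}` is covered by these two events, and since `12 B² < h²`
gives `2B ≤ h`, the bounds add up to `4 z₀ / h`. -/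

open MeasureTheory ProbabilityTheory
open scoped ENNReal

lemma add_mul_le_of_add_le_succ {a b : ℕ → ℝ} (hb : Antitone b) (h : ∀ t, a t + b t ≤ a (t + 1))
    (n : ℕ) : a 0 + n * b n ≤ a n := by
  induction n with
  | zero => simp
  | succ n ih =>
    have hmul : n * b (n + 1) ≤ n * b n := by gcongr; exact hb n.le_succ
    push_cast
    linarith [h n, hb n.le_succ]

namespace MeasureTheory

variable {Ω : Type*} {m0 : MeasurableSpace Ω} {μ : Measure Ω}

lemma memLp_of_abs_sub_succ_le [IsFiniteMeasure μ] {Z : ℕ → Ω → ℝ} {B C : ℝ}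
    (hZ : ∀ t, AEStronglyMeasurable (Z t) μ) (hZ0 : ∀ ω, |Z 0 ω| ≤ C)
    (hincr : ∀ t ω, |Z (t + 1) ω - Z t ω| ≤ B) (p : ℝ≥0∞) (t : ℕ) : MemLp (Z t) p μ := by
  refine MemLp.of_bound (hZ t) (C + t * B) (ae_of_all _ fun ω => ?_)
  have hdist : |Z 0 ω - Z t ω| ≤ t * B := by
    simpa [Real.dist_eq] using dist_le_range_sum_of_dist_le (f := fun t => Z t ω) t
      (d := fun _ => B) fun _ => by simpa [Real.dist_eq, abs_sub_comm] using hincr _ ω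
  rw [Real.norm_eq_abs]
  linarith [hZ0 ω, abs_sub_abs_le_abs_sub (Z t ω) (Z 0 ω), abs_sub_comm (Z t ω) (Z 0 ω)]

lemma condExp_const_sub_sq_ae_eq [IsFiniteMeasure μ] {m : MeasurableSpace Ω} (hm : m ≤ m0)
    {X : Ω → ℝ} (hX : MemLp X 2 μ) (c : ℝ) :
    μ[fun ω => (c - X ω) ^ 2 | m] =ᵐ[μ] fun ω => Var[X; μ | m] ω + (c - μ[X | m] ω) ^ 2 := by
  have hsq : Integrable (X ^ 2) μ := hX.integrable_sq
  have hlin : Integrable ((2 * c) • X) μ := (hX.integrable one_le_two).smul _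
  have hexpand : (fun ω => (c - X ω) ^ 2) = X ^ 2 - (2 * c) • X + fun _ => c ^ 2 := by
    ext ω
    simp only [Pi.add_apply, Pi.sub_apply, Pi.pow_apply, Pi.smul_apply, smul_eq_mul]
    ring
  rw [hexpand]
  filter_upwards [condVar_ae_eq_condExp_sq_sub_sq_condExp hm hX,
    condExp_add (hsq.sub hlin) (integrable_const (c ^ 2)) m, condExp_sub hsq hlin m,
    condExp_smul (2 * c) X m] with ω hvar hadd hsub hsmul
  simp only [hadd, Pi.add_apply, hsub, Pi.sub_apply, hsmul, Pi.smul_apply, smul_eq_mul, hvar,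
    condExp_const hm, Pi.pow_apply]
  ring

section StoppedProcess

variable {Z : ℕ → Ω → ℝ} {ρ : Ω → WithTop ℕ}

lemma stoppedProcess_zero : stoppedProcess Z ρ 0 = Z 0 :=
  funext fun _ => stoppedProcess_eq_of_le (by simp)

lemma stoppedProcess_succ_of_le {t : ℕ} {ω : Ω} (h : ρ ω ≤ t) :
    stoppedProcess Z ρ (t + 1) ω = stoppedProcess Z ρ t ω := by
  rw [stoppedProcess_eq_of_ge (i := t) (by simpa using h),
    stoppedProcess_eq_of_ge (i := t + 1) (by simpa using h.trans (by simp))]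

lemma stoppedProcess_le_add {ω : Ω} {r B : ℝ} (hZ0 : Z 0 ω ≤ r + B)
    (hincr : ∀ t, Z (t + 1) ω ≤ Z t ω + B) (hρ : ∀ t : ℕ, (t : WithTop ℕ) < ρ ω → Z t ω ≤ r)
    (t : ℕ) : stoppedProcess Z ρ t ω ≤ r + B := by
  induction t with
  | zero => rwa [stoppedProcess_zero]
  | succ t ih =>
    rcases le_or_gt (ρ ω) t with hle | hlt
    · rwa [stoppedProcess_succ_of_le hle]
    · rw [stoppedProcess_eq_of_le (by exact_mod_cast ENat.natCast_add_one_le_iff.2 hlt)]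
      linarith [hincr t, hρ t hlt]

variable {ℱ : Filtration ℕ m0} [SigmaFiniteFiltration μ ℱ]

protected lemma Supermartingale.stoppedProcess (hZ : Supermartingale Z ℱ μ)
    (hρ : IsStoppingTime ℱ ρ) : Supermartingale (stoppedProcess Z ρ) ℱ μ := by
  have hneg : stoppedProcess (-Z) ρ = -(stoppedProcess Z ρ) := rfl
  simpa [hneg] using (hZ.neg.stoppedProcess hρ).neg

lemma Supermartingale.mul_measureReal_le_integral_zero (hZ : Supermartingale Z ℱ μ)
    (hnonneg : ∀ t ω, 0 ≤ Z t ω) (r : ℝ) (n : ℕ) :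
    r * μ.real {ω | r ≤ Z n ω} ≤ ∫ ω, Z 0 ω ∂μ :=
  (mul_meas_ge_le_integral_of_nonneg (ae_of_all _ (hnonneg n)) (hZ.integrable n) r).trans
    (by simpa using hZ.setIntegral_le (Nat.zero_le n) MeasurableSet.univ)

end StoppedProcess

section ConditionalVariance

variable [IsFiniteMeasure μ] {ℱ : Filtration ℕ m0} {Z : ℕ → Ω → ℝ}

lemma Supermartingale.mul_measureReal_add_setIntegral_const_sub_sq_le
    (hZ : Supermartingale Z ℱ μ) {t : ℕ} (hZt : MemLp (Z t) 2 μ) (hZt' : MemLp (Z (t + 1)) 2 μ)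
    {s : Set Ω} (hs : MeasurableSet[ℱ t] s) {c v : ℝ} (hc : ∀ ω ∈ s, Z t ω ≤ c)
    (hv : ∀ᵐ ω ∂μ, ω ∈ s → v ≤ Var[Z (t + 1); μ | ℱ t] ω) :
    v * μ.real s + ∫ ω in s, (c - Z t ω) ^ 2 ∂μ ≤ ∫ ω in s, (c - Z (t + 1) ω) ^ 2 ∂μ := by
  have hint : Integrable (fun ω => (c - Z t ω) ^ 2) μ := ((memLp_const c).sub hZt).integrable_sq
  have hint' : Integrable (fun ω => (c - Z (t + 1) ω) ^ 2) μ :=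
    ((memLp_const c).sub hZt').integrable_sq
  calc v * μ.real s + ∫ ω in s, (c - Z t ω) ^ 2 ∂μ = ∫ ω in s, (v + (c - Z t ω) ^ 2) ∂μ := by
        rw [integral_add (integrable_const v) hint.integrableOn, setIntegral_const, smul_eq_mul,
          mul_comm]
    _ ≤ ∫ ω in s, μ[fun ω => (c - Z (t + 1) ω) ^ 2 | ℱ t] ω ∂μ := by
        refine setIntegral_mono_ae_restrict ((integrable_const v).add hint.integrableOn)
          integrable_condExp.integrableOn ?_
        rw [Filter.EventuallyLE, ae_restrict_iff' (ℱ.le t _ hs)]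
        filter_upwards [condExp_const_sub_sq_ae_eq (ℱ.le t) hZt' c, hv,
          hZ.2.1 t (t + 1) t.le_succ] with ω hsq hvω hsuper hω
        rw [hsq]
        gcongr
        · exact hvω hω
        · exact sub_nonneg.2 (hc ω hω)
    _ = ∫ ω in s, (c - Z (t + 1) ω) ^ 2 ∂μ := setIntegral_condExp (ℱ.le t) hint' hs

variable {ρ : Ω → WithTop ℕ}

lemma Supermartingale.integral_const_sub_sq_stoppedProcess_add_le (hZ : Supermartingale Z ℱ μ)
    (hL2 : ∀ t, MemLp (Z t) 2 μ) (hρ : IsStoppingTime ℱ ρ) {t : ℕ} {c v : ℝ}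
    (hc : ∀ ω, (t : WithTop ℕ) < ρ ω → Z t ω ≤ c)
    (hv : ∀ᵐ ω ∂μ, (t : WithTop ℕ) < ρ ω → v ≤ Var[Z (t + 1); μ | ℱ t] ω) :
    ∫ ω, (c - stoppedProcess Z ρ t ω) ^ 2 ∂μ + v * μ.real {ω | (t : WithTop ℕ) < ρ ω}
      ≤ ∫ ω, (c - stoppedProcess Z ρ (t + 1) ω) ^ 2 ∂μ := by
  set s := {ω | (t : WithTop ℕ) < ρ ω}
  have hs : MeasurableSet[ℱ t] s := by
    convert (hρ t).compl using 1
    ext ω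
    simp [s]
  have hs₀ : MeasurableSet s := ℱ.le t _ hs
  have hint : ∀ n, Integrable (fun ω => (c - stoppedProcess Z ρ n ω) ^ 2) μ := fun n =>
    ((memLp_const c).sub (memLp_stoppedProcess hρ hL2 n)).integrable_sq
  have hbefore : ∀ n : ℕ, (∀ ω ∈ s, (n : WithTop ℕ) ≤ ρ ω) →
      ∫ ω in s, (c - stoppedProcess Z ρ n ω) ^ 2 ∂μ = ∫ ω in s, (c - Z n ω) ^ 2 ∂μ :=
    fun n hn => setIntegral_congr_fun hs₀ fun ω hω => by
      rw [stoppedProcess_eq_of_le (by simpa using hn ω hω)]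
  have hafter : ∫ ω in sᶜ, (c - stoppedProcess Z ρ (t + 1) ω) ^ 2 ∂μ
      = ∫ ω in sᶜ, (c - stoppedProcess Z ρ t ω) ^ 2 ∂μ :=
    setIntegral_congr_fun hs₀.compl fun ω hω => by
      rw [stoppedProcess_succ_of_le (not_lt.1 hω)]
  rw [← integral_add_compl hs₀ (hint t), ← integral_add_compl hs₀ (hint (t + 1)), hafter,
    hbefore t fun ω hω => hω.le,
    hbefore (t + 1) fun ω hω => by exact_mod_cast ENat.natCast_add_one_le_iff.2 hω]
  linarith [hZ.mul_measureReal_add_setIntegral_const_sub_sq_le (hL2 t) (hL2 (t + 1)) hs hc hv]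

lemma Supermartingale.integral_const_sub_sq_add_mul_measureReal_le (hZ : Supermartingale Z ℱ μ)
    (hL2 : ∀ t, MemLp (Z t) 2 μ) (hρ : IsStoppingTime ℱ ρ) {c v : ℝ} (hv₀ : 0 ≤ v)
    (hc : ∀ (t : ℕ) ω, (t : WithTop ℕ) < ρ ω → Z t ω ≤ c)
    (hv : ∀ t : ℕ, ∀ᵐ ω ∂μ, (t : WithTop ℕ) < ρ ω → v ≤ Var[Z (t + 1); μ | ℱ t] ω) (n : ℕ) :
    ∫ ω, (c - Z 0 ω) ^ 2 ∂μ + n * (v * μ.real {ω | (n : WithTop ℕ) < ρ ω})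
      ≤ ∫ ω, (c - stoppedProcess Z ρ n ω) ^ 2 ∂μ := by
  have hanti : Antitone fun t : ℕ => v * μ.real {ω | (t : WithTop ℕ) < ρ ω} := fun s t hst =>
    mul_le_mul_of_nonneg_left (measureReal_mono fun ω hω =>
      lt_of_le_of_lt (b := (t : WithTop ℕ)) (by exact_mod_cast hst) hω) hv₀
  simpa [stoppedProcess_zero] using add_mul_le_of_add_le_succ hanti
    (fun t => hZ.integral_const_sub_sq_stoppedProcess_add_le hL2 hρ (hc t) (hv t)) n

end ConditionalVariance

lemma Supermartingale.natCast_mul_measureReal_lt_le [IsProbabilityMeasure μ]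
    {ℱ : Filtration ℕ m0} {Z : ℕ → Ω → ℝ} (hZ : Supermartingale Z ℱ μ)
    (hL2 : ∀ t, MemLp (Z t) 2 μ) {ρ : Ω → WithTop ℕ} (hρ : IsStoppingTime ℱ ρ) {c v z₀ : ℝ}
    (hv₀ : 0 ≤ v) (hc : ∀ (t : ℕ) ω, (t : WithTop ℕ) < ρ ω → Z t ω ≤ c)
    (hv : ∀ t : ℕ, ∀ᵐ ω ∂μ, (t : WithTop ℕ) < ρ ω → v ≤ Var[Z (t + 1); μ | ℱ t] ω)
    (hZ0 : Z 0 = fun _ => z₀) {n : ℕ}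
    (hW : ∀ ω, 0 ≤ stoppedProcess Z ρ n ω ∧ stoppedProcess Z ρ n ω ≤ c) :
    n * (v * μ.real {ω | (n : WithTop ℕ) < ρ ω}) ≤ 2 * c * z₀ := by
  have hgain := hZ.integral_const_sub_sq_add_mul_measureReal_le hL2 hρ hv₀ hc hv n
  have hupper : ∫ ω, (c - stoppedProcess Z ρ n ω) ^ 2 ∂μ ≤ c ^ 2 :=
    calc ∫ ω, (c - stoppedProcess Z ρ n ω) ^ 2 ∂μ ≤ ∫ _, c ^ 2 ∂μ :=
          integral_mono_of_nonneg (ae_of_all _ fun ω => sq_nonneg _) (integrable_const _)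
            (ae_of_all _ fun ω => by nlinarith [hW ω])
      _ = c ^ 2 := by simp
  simp only [hZ0, integral_const, probReal_univ, one_smul] at hgain
  nlinarith [sq_nonneg z₀]

section LeastGE

variable {Z : ℕ → Ω → ℝ} {τ : Ω → WithTop ℕ} {r : ℝ} {ω : Ω}

lemma lt_and_lt_of_lt_min_leastGE {t : ℕ} (ht : (t : WithTop ℕ) < min (τ ω) (leastGE Z r ω)) :
    (t : WithTop ℕ) < τ ω ∧ Z t ω < r := by
  obtain ⟨hτ, hleast⟩ := lt_min_iff.1 ht
  exact ⟨hτ, by simpa using notMem_of_lt_hittingAfter hleast bot_le⟩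

lemma le_stoppedProcess_min_leastGE {u : ℕ} (hτ : (u : WithTop ℕ) < τ ω)
    (hu : min (τ ω) (leastGE Z r ω) ≤ u) :
    r ≤ stoppedProcess Z (fun ω => min (τ ω) (leastGE Z r ω)) u ω := by
  have hleast : leastGE Z r ω ≤ u := (min_le_iff.1 hu).resolve_left (not_le.2 hτ)
  rw [stoppedProcess_eq_of_ge (i := u) (by simpa using hu),
    min_eq_right (hleast.trans hτ.le)]
  exact hittingAfter_mem_set_of_ne_top (ne_top_of_le_ne_top (by simp) hleast)

end LeastGE

lemma Supermartingale.measureReal_lt_le_add [IsProbabilityMeasure μ] {ℱ : Filtration ℕ m0}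
    {Z : ℕ → Ω → ℝ} (hZ : Supermartingale Z ℱ μ) (hnonneg : ∀ t ω, 0 ≤ Z t ω) {z₀ B h v : ℝ}
    (hZ0 : Z 0 = fun _ => z₀) (hincr : ∀ t ω, |Z (t + 1) ω - Z t ω| ≤ B) (hB : 0 ≤ B)
    (hz₀ : z₀ ≤ h) (hh : 0 < h) {τ : Ω → WithTop ℕ} (hτ : IsStoppingTime ℱ τ) (hv₀ : 0 < v)
    (hv : ∀ t : ℕ, ∀ᵐ ω ∂μ, (t : WithTop ℕ) < τ ω → v ≤ Var[Z (t + 1); μ | ℱ t] ω)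
    {u : ℕ} (hu : 0 < u) :
    μ.real {ω | (u : WithTop ℕ) < τ ω} ≤ 2 * (h + B) * z₀ / (u * v) + z₀ / h := by
  have hL2 : ∀ t, MemLp (Z t) 2 μ := memLp_of_abs_sub_succ_le (C := |z₀|)
    (fun t => (hZ.integrable t).aestronglyMeasurable) (fun ω => by simp [hZ0]) hincr 2
  set ρ : Ω → WithTop ℕ := fun ω => min (τ ω) (leastGE Z h ω)
  have hρ : IsStoppingTime ℱ ρ := hτ.min (hZ.stronglyAdapted.isStoppingTime_leastGE h)
  have hbelow : ∀ (t : ℕ) ω, (t : WithTop ℕ) < ρ ω → (t : WithTop ℕ) < τ ω ∧ Z t ω < h :=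
    fun _ _ ht => lt_and_lt_of_lt_min_leastGE (τ := τ) ht
  have hW : ∀ t ω, 0 ≤ stoppedProcess Z ρ t ω ∧ stoppedProcess Z ρ t ω ≤ h + B := fun t ω =>
    ⟨hnonneg _ ω, stoppedProcess_le_add (Z := Z) (ρ := ρ) (by rw [hZ0]; linarith)
      (fun t => by linarith [(abs_le.1 (hincr t ω)).2]) (fun t ht => (hbelow t ω ht).2.le) t⟩
  have henergy := hZ.natCast_mul_measureReal_lt_le hL2 hρ hv₀.le
    (fun t ω ht => (hbelow t ω ht).2.le.trans (by linarith))
    (fun t => (hv t).mono fun ω hω ht => hω (hbelow t ω ht).1) hZ0 (hW u)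
  have hexit := (hZ.stoppedProcess hρ).mul_measureReal_le_integral_zero
    (fun t ω => (hW t ω).1) h u
  rw [stoppedProcess_zero, hZ0, integral_const, probReal_univ, one_smul] at hexit
  have hcover : {ω | (u : WithTop ℕ) < τ ω}
      ⊆ {ω | (u : WithTop ℕ) < ρ ω} ∪ {ω | h ≤ stoppedProcess Z ρ u ω} :=
    fun ω hω => (lt_or_ge (u : WithTop ℕ) (ρ ω)).imp id
      (le_stoppedProcess_min_leastGE (τ := τ) hω)
  calc μ.real {ω | (u : WithTop ℕ) < τ ω}
      ≤ μ.real {ω | (u : WithTop ℕ) < ρ ω} + μ.real {ω | h ≤ stoppedProcess Z ρ u ω} :=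
        (measureReal_mono hcover).trans (measureReal_union_le _ _)
    _ ≤ 2 * (h + B) * z₀ / (u * v) + z₀ / h := by
        gcongr
        · rw [le_div_iff₀ (by positivity)]
          linarith
        · rw [le_div_iff₀ hh]
          linarith

end MeasureTheory

/-- (Levin–Peres–Wilmer, Proposition 17.20.) Let `(Z_t)` be a non-negative supermartingale
adapted to `(ℱ_t)` with `Z_0 = z₀`, increments bounded by `B`, and conditional variance
`Var(Z_{t+1} | ℱ_t) > σ²` on `{τ > t}` for a stopping time `τ`. Then for every `u > 12B²/σ²`,
`P(τ > u) ≤ 4z₀/(σ√u)`. -/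
theorem hitting_time_estimate {Ω : Type*} [m0 : MeasurableSpace Ω]
    (μ : Measure Ω) [IsProbabilityMeasure μ] (ℱ : Filtration ℕ m0)
    (Z : ℕ → Ω → ℝ) (B σ z₀ : ℝ) (hB : 0 < B) (hσ : 0 < σ) (hz₀ : 0 < z₀)
    (hsuper : Supermartingale Z ℱ μ)
    (hnonneg : ∀ t ω, 0 ≤ Z t ω)
    (hZ0 : Z 0 = fun _ => z₀)
    (hincr : ∀ t ω, |Z (t + 1) ω - Z t ω| ≤ B)
    (τ : Ω → ℕ) (hτ : IsStoppingTime ℱ (fun ω => (τ ω : WithTop ℕ)))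
    (hvar : ∀ t, ∀ᵐ ω ∂μ, t < τ ω →
      σ ^ 2 < (μ[(fun ω' => (Z (t + 1) ω' - (μ[Z (t + 1) | ℱ t]) ω') ^ 2) | ℱ t]) ω) :
    ∀ u : ℕ, 12 * B ^ 2 / σ ^ 2 < u →
      μ {ω | u < τ ω} ≤ ENNReal.ofReal (4 * z₀ / (σ * Real.sqrt u)) := by
  intro u hu
  set h := σ * Real.sqrt u with hh_def
  have hu₀ : (0 : ℝ) < u := lt_of_le_of_lt (by positivity) hu
  have hh : 0 < h := by positivity
  have hh2 : (u : ℝ) * σ ^ 2 = h ^ 2 := by rw [hh_def, mul_pow, Real.sq_sqrt hu₀.le, mul_comm]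
  have hBh : 2 * B ≤ h := by
    rw [div_lt_iff₀ (by positivity)] at hu
    nlinarith
  rcases le_or_gt h z₀ with hz | hz
  · refine prob_le_one.trans ?_
    rw [ENNReal.one_le_ofReal, le_div_iff₀ hh]
    linarith
  have hbound := hsuper.measureReal_lt_le_add hnonneg hZ0 hincr hB.le hz.le hh hτ (pow_pos hσ 2)
    (fun t => (hvar t).mono fun ω hω ht => (hω (by exact_mod_cast ht)).le) (Nat.cast_pos.1 hu₀)
  simp only [Nat.cast_lt, hh2] at hbound
  rw [ENNReal.le_ofReal_iff_toReal_le (measure_ne_top _ _) (by positivity), ← measureReal_def]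
  refine hbound.trans ?_
  rw [div_add_div _ _ (by positivity) hh.ne', div_le_div_iff₀ (by positivity) hh]
  nlinarith [mul_nonneg (mul_nonneg hz₀.le (sq_nonneg h)) (sub_nonneg.2 hBh)]
end

section
/- For n ≥ 2, k ≥ 1 with k = o(n), and γ ≥ 0, setting t(γ) = (n/(4k)) log n + γn/k and f_2(k) = 1 - 2(2n-1)k/n² + 2(2n-1)k(k-1)/(n²(n-1)), one has f_2(k)^{t(γ)} ≤ (1 - 2k/n)^{(n/(2k)) log n + 2γn/k}, and the right-hand side is at most C/(n e^{4γ}) for a universal constant C (for n sufficiently large). -/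
/-! With `f₁ = 1 - 2k/n`, one has `f₁² - f₂ = 2k(n-k)/(n²(n-1)) ≥ 0`, and the exponent on the
right is exactly twice `t(γ)`; so `f₂^t ≤ (f₁²)^t = f₁^{2t}`. Then `1 - x ≤ e^{-x}` gives
`f₁^{2t} ≤ exp(-(2k/n)·2t) = exp(-log n - 4γ) = 1/(n e^{4γ})`, so `C = 1` works as soon as
`k/n` is small enough for `f₁` and `f₂` to be nonnegative. -/

open Filter Real

namespace F2PowerDecay

noncomputable def f₁ (n k : ℝ) : ℝ := 1 - 2 * k / n

noncomputable def f₂ (n k : ℝ) : ℝ :=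
  1 - 2 * (2 * n - 1) * k / n ^ 2 + 2 * (2 * n - 1) * k * (k - 1) / (n ^ 2 * (n - 1))

variable {n k : ℝ}

theorem f₂_eq (hn : 1 < n) : f₂ n k = 1 - 2 * (2 * n - 1) * k * (n - k) / (n ^ 2 * (n - 1)) := by
  have : n - 1 ≠ 0 := by linarith
  unfold f₂
  field_simp
  ring

theorem sq_f₁_sub_f₂ (hn : 1 < n) : f₁ n k ^ 2 - f₂ n k = 2 * k * (n - k) / (n ^ 2 * (n - 1)) := by
  have : n - 1 ≠ 0 := by linarith
  have : n ≠ 0 := by linarith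
  rw [f₂_eq hn, f₁]
  field_simp
  ring

theorem f₂_le_sq_f₁ (hn : 1 < n) (hk : 0 ≤ k) (hkn : k ≤ n) : f₂ n k ≤ f₁ n k ^ 2 := by
  have : 0 ≤ 2 * k * (n - k) / (n ^ 2 * (n - 1)) :=
    div_nonneg (by nlinarith) (mul_nonneg (sq_nonneg n) (by linarith))
  linarith [sq_f₁_sub_f₂ (k := k) hn]

theorem f₁_nonneg (hn : 0 < n) (hkn : 2 * k ≤ n) : 0 ≤ f₁ n k := by
  rw [f₁, sub_nonneg, div_le_one hn]
  exact hkn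

theorem f₂_nonneg (hn : 1 < n) (hk : 0 ≤ k) (hkn : 4 * k ≤ n - 1) : 0 ≤ f₂ n k := by
  have hn1 : 0 < n - 1 := by linarith
  have hnum : 2 * (2 * n - 1) * k * (n - k) ≤ 4 * k * n ^ 2 := by
    have : (2 * n - 1) * (n - k) ≤ 2 * n * n :=
      mul_le_mul (by linarith) (by linarith) (by linarith) (by linarith)
    nlinarith
  rw [f₂_eq hn, sub_nonneg, div_le_one (by positivity)]
  nlinarith

theorem f₂_rpow_le_f₁_rpow (hn : 1 < n) (hk : 0 ≤ k) (hkn : 4 * k ≤ n - 1) {t : ℝ}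
    (ht : 0 ≤ t) : f₂ n k ^ t ≤ f₁ n k ^ (2 * t) :=
  calc f₂ n k ^ t ≤ (f₁ n k ^ 2) ^ t :=
        rpow_le_rpow (f₂_nonneg hn hk hkn) (f₂_le_sq_f₁ hn hk (by linarith)) ht
    _ = f₁ n k ^ (2 * t) := by
        rw [rpow_mul (f₁_nonneg (by linarith) (by linarith)), rpow_two]

theorem one_sub_rpow_le_exp {x t : ℝ} (hx : x ≤ 1) (ht : 0 ≤ t) :
    (1 - x) ^ t ≤ exp (-(x * t)) :=
  calc (1 - x) ^ t ≤ exp (-x) ^ t :=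
        rpow_le_rpow (by linarith) (by linarith [add_one_le_exp (-x)]) ht
    _ = exp (-(x * t)) := by rw [← exp_mul, neg_mul]

theorem f₁_rpow_le_one_div (hn : 1 ≤ n) (hk : 0 < k) (hkn : 2 * k ≤ n) {γ : ℝ} (hγ : 0 ≤ γ) :
    f₁ n k ^ (n / (2 * k) * log n + 2 * γ * n / k) ≤ 1 / (n * exp (4 * γ)) := by
  have hn0 : 0 < n := by linarith
  calc f₁ n k ^ (n / (2 * k) * log n + 2 * γ * n / k)
      ≤ exp (-(2 * k / n * (n / (2 * k) * log n + 2 * γ * n / k))) :=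
        one_sub_rpow_le_exp (by rw [div_le_one hn0]; exact hkn)
          (by have := log_nonneg hn; positivity)
    _ = exp (-(log n + 4 * γ)) := by
        congr 2
        field_simp
        ring
    _ = 1 / (n * exp (4 * γ)) := by rw [exp_neg, exp_add, exp_log hn0, one_div]

end F2PowerDecay

open F2PowerDecay in
/-- For `k = k(n) = o(n)` with `k ≥ 1`, setting `t(γ) = (n/(4k)) log n + γn/k` and
`f₂(k) = 1 - 2(2n-1)k/n² + 2(2n-1)k(k-1)/(n²(n-1))`, one has (for `n` sufficiently large)
`f₂(k)^{t(γ)} ≤ (1 - 2k/n)^{(n/(2k)) log n + 2γn/k}` for every `γ ≥ 0`, and the right-hand side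
is at most `C/(n e^{4γ})` for a universal constant `C`. -/
theorem f2_power_decay (k : ℕ → ℕ) (hk1 : ∀ n, 1 ≤ k n)
    (hko : Tendsto (fun n : ℕ => (k n : ℝ) / n) atTop (nhds 0)) :
    ∃ C : ℝ, 0 < C ∧ ∀ᶠ n : ℕ in atTop, ∀ γ : ℝ, 0 ≤ γ →
      (1 - 2 * (2 * (n : ℝ) - 1) * (k n) / (n : ℝ) ^ 2
          + 2 * (2 * (n : ℝ) - 1) * (k n) * ((k n : ℝ) - 1) / ((n : ℝ) ^ 2 * ((n : ℝ) - 1)))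
          ^ ((n : ℝ) / (4 * k n) * Real.log n + γ * n / k n)
        ≤ (1 - 2 * (k n : ℝ) / n) ^ ((n : ℝ) / (2 * k n) * Real.log n + 2 * γ * n / k n) ∧
      (1 - 2 * (k n : ℝ) / n) ^ ((n : ℝ) / (2 * k n) * Real.log n + 2 * γ * n / k n)
        ≤ C / ((n : ℝ) * Real.exp (4 * γ)) := by
  refine ⟨1, one_pos, ?_⟩
  have hsmall : ∀ᶠ n : ℕ in atTop, (k n : ℝ) / n < 1 / 8 :=
    hko.eventually (gt_mem_nhds (by norm_num))
  filter_upwards [hsmall, eventually_ge_atTop 2] with n hsmall hn2 γ hγ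
  have hn : (2 : ℝ) ≤ n := by exact_mod_cast hn2
  have hk : (1 : ℝ) ≤ k n := by exact_mod_cast hk1 n
  have h8k : 8 * (k n : ℝ) < n := by linarith [(div_lt_iff₀ (by linarith)).mp hsmall]
  have hexp : (n : ℝ) / (2 * k n) * log n + 2 * γ * n / k n
      = 2 * ((n : ℝ) / (4 * k n) * log n + γ * n / k n) := by
    field_simp
    ring
  refine ⟨?_, f₁_rpow_le_one_div (by linarith) (by linarith) (by linarith) hγ⟩
  rw [hexp]
  exact f₂_rpow_le_f₁_rpow (by linarith) (by linarith) (by linarith)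
    (by have := log_nonneg (by linarith : (1 : ℝ) ≤ n); positivity)
end

section
/- If A > 0 and X_0 ∈ {0,...,n} satisfies |X_0 - n/2| ≤ A√n, then f_2(X_0) ≤ f_1(n/2 + A√n)² ≤ C·A²/n for a universal constant C, where f_1(x) = 1 - 2x/n and f_2(x) = 1 - 2(2n-1)x/n² + 2(2n-1)x(x-1)/(n²(n-1)). -/
/-! The identity `f₂ = f₁² + (f₁² - 1)/(2n-2)` shows `f₂ ≤ f₁²` wherever `|f₁| ≤ 1`,
in particular on `[0, n]`. Since `f₁(x) = -2(x - n/2)/n`, the square `f₁²` grows with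
`|x - n/2|`, and at `x = n/2 + A√n` it equals `4A²/n`. -/

namespace F2Bound

noncomputable def f₁ (n x : ℝ) : ℝ := 1 - 2 * x / n

noncomputable def f₂ (n x : ℝ) : ℝ :=
  1 - 2 * (2 * n - 1) * x / n ^ 2 + 2 * (2 * n - 1) * x * (x - 1) / (n ^ 2 * (n - 1))

variable {n : ℝ}

theorem f₁_eq (hn : n ≠ 0) (x : ℝ) : f₁ n x = -2 * (x - n / 2) / n := by
  unfold f₁
  field_simp
  ring

theorem f₂_eq_f₁_sq_add (hn : n ≠ 0) (hn₁ : n ≠ 1) (x : ℝ) :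
    f₂ n x = f₁ n x ^ 2 + (f₁ n x ^ 2 - 1) / (2 * n - 2) := by
  have hn₁' : n - 1 ≠ 0 := sub_ne_zero.mpr hn₁
  unfold f₂ f₁
  field_simp
  ring

theorem f₂_le_f₁_sq (hn : 1 < n) {x : ℝ} (hx : f₁ n x ^ 2 ≤ 1) : f₂ n x ≤ f₁ n x ^ 2 := by
  rw [f₂_eq_f₁_sq_add (by positivity) hn.ne', add_le_iff_nonpos_right]
  exact div_nonpos_of_nonpos_of_nonneg (by linarith) (by linarith)

theorem f₁_sq_le_one (hn : 0 < n) {x : ℝ} (hx₀ : 0 ≤ x) (hxn : x ≤ n) : f₁ n x ^ 2 ≤ 1 := by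
  rw [sq_le_one_iff_abs_le_one, abs_le, f₁]
  constructor
  · rw [le_sub_comm, sub_neg_eq_add, div_le_iff₀ hn]
    linarith
  · rw [sub_le_self_iff]
    positivity

theorem f₁_sq_le_f₁_sq (hn : 0 < n) {x y : ℝ} (h : |x - n / 2| ≤ |y - n / 2|) :
    f₁ n x ^ 2 ≤ f₁ n y ^ 2 := by
  rw [sq_le_sq, f₁_eq hn.ne', f₁_eq hn.ne', abs_div, abs_div, abs_mul, abs_mul]
  gcongr

theorem f₁_half_add_sq (hn : 0 < n) (A : ℝ) :
    f₁ n (n / 2 + A * √n) ^ 2 = 4 * A ^ 2 / n := by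
  rw [f₁_eq hn.ne', add_sub_cancel_left, div_pow, mul_pow, mul_pow, Real.sq_sqrt hn.le]
  field_simp
  ring

end F2Bound

open F2Bound in
/-- There is a universal constant `C` such that for every `n ≥ 2`, `A > 0` and
`X₀ ∈ {0,…,n}` with `|X₀ - n/2| ≤ A√n`, writing `f₁(x) = 1 - 2x/n` and
`f₂(x) = 1 - 2(2n-1)x/n² + 2(2n-1)x(x-1)/(n²(n-1))`, one has
`f₂(X₀) ≤ f₁(n/2 + A√n)² ≤ C·A²/n`. -/
theorem f2_bound_near_half :
    ∃ C : ℝ, 0 < C ∧ ∀ (n : ℕ), 2 ≤ n → ∀ (A : ℝ), 0 < A → ∀ (X₀ : ℕ), X₀ ≤ n →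
      |(X₀ : ℝ) - (n : ℝ) / 2| ≤ A * Real.sqrt n →
      (1 - 2 * (2 * (n : ℝ) - 1) * (X₀ : ℝ) / (n : ℝ) ^ 2
          + 2 * (2 * (n : ℝ) - 1) * (X₀ : ℝ) * ((X₀ : ℝ) - 1) / ((n : ℝ) ^ 2 * ((n : ℝ) - 1)))
        ≤ (1 - 2 * ((n : ℝ) / 2 + A * Real.sqrt n) / n) ^ 2 ∧
      (1 - 2 * ((n : ℝ) / 2 + A * Real.sqrt n) / n) ^ 2 ≤ C * A ^ 2 / n := by
  refine ⟨4, by norm_num, fun n hn A hA X₀ hX₀ hdist => ?_⟩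
  have hn₁ : (1 : ℝ) < n := by exact_mod_cast hn
  have hn₀ : (0 : ℝ) < n := by linarith
  have hX₀n : (X₀ : ℝ) ≤ n := by exact_mod_cast hX₀
  have hdist' : |(X₀ : ℝ) - n / 2| ≤ |(n / 2 + A * √n) - n / 2| := by
    rwa [add_sub_cancel_left, abs_of_nonneg (mul_nonneg hA.le (Real.sqrt_nonneg _))]
  change f₂ n X₀ ≤ f₁ n (n / 2 + A * √n) ^ 2 ∧ f₁ n (n / 2 + A * √n) ^ 2 ≤ 4 * A ^ 2 / n
  refine ⟨?_, (f₁_half_add_sq hn₀ A).le⟩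
  calc f₂ n X₀ ≤ f₁ n X₀ ^ 2 := f₂_le_f₁_sq hn₁ (f₁_sq_le_one hn₀ X₀.cast_nonneg hX₀n)
    _ ≤ f₁ n (n / 2 + A * √n) ^ 2 := f₁_sq_le_f₁_sq hn₀ hdist'
end
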